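/- arXiv:0903.5347 — 4 statements merged into one kernel-verified Lean document; each statement's English description precedes it below -/
import Mathlib

section
/- Let g0 > 0 and define h(k) = √(1 + 4·g0/|k|²) for k ∈ ℝ³ \ {0}. Then (1/(2π)³) ∫_{ℝ³} (h(k)−1)²/(4h(k)) dk = g0^{3/2}/(3π²). -/
open MeasureTheory Real Set Filter

lemma radial_aux (a : ℝ) (ha : 0 < a) :
    ∫ y in Set.Ioi (0:ℝ), y ^ 2 *
      ((Real.sqrt (1 + a / y ^ 2) - 1) ^ 2 / (4 * Real.sqrt (1 + a / y ^ 2)))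
    = a * Real.sqrt a / 12 := by
  set F : ℝ → ℝ := fun r => (Real.sqrt (r ^ 2 + a)) ^ 3 / 6 - a * Real.sqrt (r ^ 2 + a) / 4
    - r ^ 3 / 6 with hF
  have hsq : ∀ r : ℝ, 0 < r ^ 2 + a := fun r => by positivity
  have hspos : ∀ r : ℝ, 0 < Real.sqrt (r ^ 2 + a) := fun r => Real.sqrt_pos.2 (hsq r)
  have hs2 : ∀ r : ℝ, (Real.sqrt (r ^ 2 + a)) ^ 2 = r ^ 2 + a :=
    fun r => Real.sq_sqrt (hsq r).le
  -- continuity of F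
  have hFcont : Continuous F := by
    apply Continuous.sub
    apply Continuous.sub
    · exact (((continuous_pow 2).add continuous_const).sqrt.pow 3).div_const 6
    · exact (continuous_const.mul ((continuous_pow 2).add continuous_const).sqrt).div_const 4
    · exact (continuous_pow 3).div_const 6
  -- derivative
  have hderiv : ∀ x ∈ Ioi (0:ℝ), HasDerivAt F
      (x ^ 2 * ((Real.sqrt (1 + a / x ^ 2) - 1) ^ 2 / (4 * Real.sqrt (1 + a / x ^ 2)))) x := by
    intro x hx
    have hx0 : 0 < x := hx
    set s := Real.sqrt (x ^ 2 + a) with hs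
    have hs0 : s ≠ 0 := (hspos x).ne'
    have hsder : HasDerivAt (fun r : ℝ => Real.sqrt (r ^ 2 + a)) (x / s) x := by
      have h := (((hasDerivAt_pow 2 x).add_const a)).sqrt (hsq x).ne'
      convert h using 1
      push_cast
      rw [pow_one]
      field_simp
      ring
    have h1 := (((hsder.pow 3).div_const 6).sub ((hsder.const_mul a).div_const 4)).sub
        ((hasDerivAt_pow 3 x).div_const 6)
    convert h1 using 1
    case e'_4 => rfl
    case e'_5 => rfl
    case e'_8 => rfl
    have hsval : Real.sqrt (1 + a / x ^ 2) = s / x := by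
      rw [show 1 + a / x ^ 2 = (x ^ 2 + a) / x ^ 2 by field_simp,
        Real.sqrt_div (hsq x).le, Real.sqrt_sq hx0.le]
    rw [hsval]
    have ha' : a = s ^ 2 - x ^ 2 := by
      have := hs2 x; linarith
    push_cast
    field_simp
    rw [ha']
    ring_nf
    rw [Real.sq_sqrt (sq_nonneg s)]
    ring
  -- nonneg
  have hpos : ∀ x ∈ Ioi (0:ℝ), 0 ≤ x ^ 2 *
      ((Real.sqrt (1 + a / x ^ 2) - 1) ^ 2 / (4 * Real.sqrt (1 + a / x ^ 2))) := by
    intro x _; positivity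
  -- tendsto 0
  have htend : Tendsto F atTop (nhds 0) := by
    set G : ℝ → ℝ := fun u => -a ^ 2 * u * (2 + Real.sqrt (1 + a * u ^ 2)) /
      (12 * (Real.sqrt (1 + a * u ^ 2) + 1) ^ 2) with hG
    have hGd : ∀ u : ℝ, (0:ℝ) < 12 * (Real.sqrt (1 + a * u ^ 2) + 1) ^ 2 := by
      intro u
      have := Real.sqrt_nonneg (1 + a * u ^ 2)
      positivity
    have hGcont : Continuous G := by
      apply Continuous.div
      · fun_prop
      · fun_prop
      · intro u; exact (hGd u).ne'
    have hG0 : G 0 = 0 := by simp [hG]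
    have h1 : Tendsto (fun r : ℝ => G r⁻¹) atTop (nhds 0) := by
      rw [← hG0]
      exact (hGcont.tendsto 0).comp tendsto_inv_atTop_zero
    refine h1.congr' ?_
    filter_upwards [eventually_gt_atTop (0:ℝ)] with r hr
    have hr0 : r ≠ 0 := hr.ne'
    set s := Real.sqrt (r ^ 2 + a) with hs
    have hsval : Real.sqrt (1 + a * (r⁻¹) ^ 2) = s / r := by
      rw [show 1 + a * (r⁻¹) ^ 2 = (r ^ 2 + a) / r ^ 2 by field_simp,
        Real.sqrt_div (hsq r).le, Real.sqrt_sq hr.le]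
    have hs0 : s ≠ 0 := (hspos r).ne'
    have hsr : 0 < s + r := by
      have := hspos r; positivity
    have ha' : a = s ^ 2 - r ^ 2 := by
      have := hs2 r; linarith
    simp only [hG, hF, hsval]
    have h2 : (s / r + 1) = (s + r)/r := by field_simp
    rw [h2]
    field_simp
    rw [ha', show r ^ 2 + (s ^ 2 - r ^ 2) = s ^ 2 from by ring, Real.sqrt_sq (hspos r).le]
    ring
  have := integral_Ioi_of_hasDerivAt_of_nonneg (hFcont.continuousWithinAt) hderiv hpos htend
  rw [this]
  have h1 : Real.sqrt ((0:ℝ) ^ 2 + a) = Real.sqrt a := by norm_num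
  have h2 : (Real.sqrt a) ^ 3 = a * Real.sqrt a := by
    rw [pow_succ, Real.sq_sqrt ha.le]
  simp only [hF, h1, h2]
  ring

theorem stmt_2 (g0 : ℝ) (hg0 : 0 < g0) :
    (1 / (2 * π) ^ 3) *
        ∫ k : EuclideanSpace ℝ (Fin 3),
          (Real.sqrt (1 + 4 * g0 / ‖k‖ ^ 2) - 1) ^ 2 /
            (4 * Real.sqrt (1 + 4 * g0 / ‖k‖ ^ 2)) =
      g0 ^ ((3 : ℝ) / 2) / (3 * π ^ 2) := by
  have key := MeasureTheory.integral_fun_norm_addHaar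
    (volume : Measure (EuclideanSpace ℝ (Fin 3)))
    (fun r : ℝ => (Real.sqrt (1 + 4 * g0 / r ^ 2) - 1) ^ 2 /
      (4 * Real.sqrt (1 + 4 * g0 / r ^ 2)))
  simp only [finrank_euclideanSpace_fin, smul_eq_mul, nsmul_eq_mul] at key
  rw [key]
  have hball : (volume (Metric.ball (0:EuclideanSpace ℝ (Fin 3)) 1)).toReal = 4 * π / 3 := by
    rw [EuclideanSpace.volume_ball]
    have hΓ : Real.Gamma ((3:ℝ) / 2 + 1) = 3 / 4 * Real.sqrt π := by
      rw [Real.Gamma_add_one (by norm_num),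
        show (3:ℝ)/2 = 1/2 + 1 by norm_num, Real.Gamma_add_one (by norm_num),
        Real.Gamma_one_half_eq]
      ring
    have hc : (Fintype.card (Fin 3) : ℝ) = 3 := by simp
    simp only [Fintype.card_fin, hc] at *
    push_cast
    rw [hΓ]
    have hsπ : Real.sqrt π ^ 3 / (3 / 4 * Real.sqrt π) = 4 * π / 3 := by
      have h1 : Real.sqrt π ≠ 0 := by positivity
      rw [pow_succ, pow_two, Real.mul_self_sqrt Real.pi_pos.le]
      field_simp
    rw [hsπ]
    simp
    positivity
  have hrad : ∫ y in Set.Ioi (0:ℝ), y ^ (3-1) *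
      ((Real.sqrt (1 + 4 * g0 / y ^ 2) - 1) ^ 2 / (4 * Real.sqrt (1 + 4 * g0 / y ^ 2)))
      = 2 / 3 * (g0 * Real.sqrt g0) := by
    have h := radial_aux (4 * g0) (by positivity)
    norm_num at h ⊢
    rw [h]
    have h4 : Real.sqrt 4 = 2 := by
      rw [show (4:ℝ) = 2 ^ 2 by norm_num, Real.sqrt_sq (by norm_num : (0:ℝ) ≤ 2)]
    ring
  rw [measureReal_def, hball, hrad]
  have hg32 : g0 ^ ((3:ℝ)/2) = g0 * Real.sqrt g0 := by
    rw [Real.sqrt_eq_rpow, show (3:ℝ)/2 = 1 + 1/2 by norm_num, Real.rpow_add hg0,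
      Real.rpow_one]
  rw [hg32]
  have hπ : (π:ℝ) ≠ 0 := Real.pi_ne_zero
  field_simp
  ring
end

section
/- Let g0 > 0 and define h(k) = √(1 + 4·g0/|k|²). Then (1/(2π)³) ∫_{ℝ³} |k|² · ( (1 + 2g0/|k|²)/(2h(k)) − (1 + 2(g0/|k|²)²)/2 ) dk = −(8/(5π²))·g0^{5/2}. -/
open MeasureTheory Real Filter

noncomputable def Fg (g r : ℝ) : ℝ :=
  (Real.sqrt (r^2 + 4*g) * (r^4 - 2*g*r^2 + 16*g^2) - r^5 - 10*g^2*r) / 10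

lemma Fg_deriv (g : ℝ) (hg : 0 < g) (r : ℝ) (hr : 0 < r) :
    HasDerivAt (Fg g)
      (r ^ 2 * (r ^ 2 *
        ((1 + 2 * g / r ^ 2) / (2 * Real.sqrt (1 + 4 * g / r ^ 2)) -
          (1 + 2 * (g / r ^ 2) ^ 2) / 2))) r := by
  have hpos : (0:ℝ) < r^2 + 4*g := by positivity
  set u := Real.sqrt (r^2 + 4*g) with hu_def
  have hu : 0 < u := Real.sqrt_pos.mpr hpos
  have hu2 : u ^ 2 = r^2 + 4*g := Real.sq_sqrt hpos.le
  have hsqrt : HasDerivAt (fun r : ℝ => Real.sqrt (r^2 + 4*g)) (r / u) r := by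
    have h1 : HasDerivAt (fun r : ℝ => r^2 + 4*g) (2*r) r := by
      simpa using ((hasDerivAt_pow 2 r).add_const (4*g))
    have h2 := (Real.hasDerivAt_sqrt hpos.ne').comp r h1
    refine h2.congr_deriv ?_
    rw [← hu_def]
    field_simp
  have hQ : HasDerivAt (fun r : ℝ => r^4 - 2*g*r^2 + 16*g^2) (4*r^3 - 4*g*r) r := by
    have := (((hasDerivAt_pow 4 r).sub ((hasDerivAt_pow 2 r).const_mul (2*g))).add_const (16*g^2))
    refine this.congr_deriv ?_; norm_num; ring
  have hF : HasDerivAt (Fg g)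
      (((r/u) * (r^4 - 2*g*r^2 + 16*g^2) + u * (4*r^3 - 4*g*r) - 5*r^4 - 10*g^2) / 10) r := by
    have h5 : HasDerivAt (fun r : ℝ => r^5) (5*r^4) r := by simpa using hasDerivAt_pow 5 r
    have hl : HasDerivAt (fun r : ℝ => 10*g^2*r) (10*g^2) r := by
      simpa using (hasDerivAt_id r).const_mul (10*g^2)
    exact (((hsqrt.mul hQ).sub h5).sub hl).div_const 10
  convert hF using 1
  have hs : Real.sqrt (1 + 4*g/r^2) = u / r := by
    rw [show 1 + 4*g/r^2 = (r^2+4*g)/r^2 by field_simp, Real.sqrt_div hpos.le,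
      Real.sqrt_sq hr.le]
  rw [hs]
  field_simp
  linear_combination (8*g*r - 8*r^3) * hu2

lemma aux_ineq (x : ℝ) (hx : 0 < x) :
    (1 + 2*x) / (2 * Real.sqrt (1 + 4*x)) ≤ (1 + 2*x^2) / 2 := by
  have h1 : (0:ℝ) < 1 + 4*x := by linarith
  set s := Real.sqrt (1 + 4*x) with hsd
  have hs : 0 < s := Real.sqrt_pos.mpr h1
  have hs2 : s^2 = 1 + 4*x := Real.sq_sqrt h1.le
  rw [div_le_div_iff₀ (by positivity) (by norm_num)]
  nlinarith [sq_nonneg ((1+2*x^2)*s - (1+2*x)), sq_nonneg (s - 1), mul_pos hs hx,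
    mul_pos (mul_pos hs hx) hx, sq_nonneg (s*x - x), mul_pos hx hx]

lemma integrand_nonpos (g : ℝ) (hg : 0 < g) (r : ℝ) (hr : 0 < r) :
    r ^ 2 * (r ^ 2 *
        ((1 + 2 * g / r ^ 2) / (2 * Real.sqrt (1 + 4 * g / r ^ 2)) -
          (1 + 2 * (g / r ^ 2) ^ 2) / 2)) ≤ 0 := by
  have hx : 0 < g / r^2 := by positivity
  have key := sub_nonpos.mpr (aux_ineq (g / r^2) hx)
  have hre : 1 + 4 * g / r ^ 2 = 1 + 4 * (g / r^2) := by ring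
  have h2g : 1 + 2 * g / r ^ 2 = 1 + 2 * (g / r^2) := by ring
  rw [hre, h2g]
  exact mul_nonpos_of_nonneg_of_nonpos (by positivity)
    (mul_nonpos_of_nonneg_of_nonpos (by positivity) key)

lemma Fg_tendsto (g : ℝ) (hg : 0 < g) : Tendsto (Fg g) atTop (nhds 0) := by
  have habs : Tendsto (fun r => |Fg g r|) atTop (nhds 0) := by
    apply squeeze_zero' (Eventually.of_forall fun r => abs_nonneg _)
    · filter_upwards [eventually_ge_atTop (1:ℝ)] with r hr1
      have hr : 0 < r := lt_of_lt_of_le one_pos hr1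
      have hpos : (0:ℝ) < r^2 + 4*g := by positivity
      set u := Real.sqrt (r^2 + 4*g) with hud
      have hu : 0 < u := Real.sqrt_pos.mpr hpos
      have hu2 : u ^ 2 = r^2 + 4*g := Real.sq_sqrt hpos.le
      have hQ : 0 < r^4 - 2*g*r^2 + 16*g^2 := by nlinarith [sq_nonneg (r^2 - g)]
      have hD : 0 < u * (r^4 - 2*g*r^2 + 16*g^2) + (r^5 + 10*g^2*r) := by positivity
      have hden : (0:ℝ) < 10 * (u * (r^4 - 2*g*r^2 + 16*g^2) + (r^5 + 10*g^2*r)) := by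
        linarith
      have hFg : Fg g r = (u * (r^4 - 2*g*r^2 + 16*g^2) - r^5 - 10*g^2*r) / 10 := rfl
      have hFeq : Fg g r = (80*g^3*r^4 - 100*g^4*r^2 + 1024*g^5) /
          (10 * (u * (r^4 - 2*g*r^2 + 16*g^2) + (r^5 + 10*g^2*r))) := by
        rw [hFg, div_eq_div_iff (by norm_num) hden.ne']
        linear_combination 10*(r^4 - 2*g*r^2 + 16*g^2)^2 * hu2
      show |Fg g r| ≤ ((80*g^3 + 100*g^4 + 1024*g^5)/10) / r
      rw [hFeq, abs_div, abs_of_pos hden, div_le_div_iff₀ hden hr]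
      have h1 : |80*g^3*r^4 - 100*g^4*r^2 + 1024*g^5| ≤ 80*g^3*r^4 + 100*g^4*r^2 + 1024*g^5 := by
        rw [abs_le]
        constructor
        · nlinarith [mul_pos (pow_pos hg 3) (pow_pos hr 4), pow_pos hg 5]
        · nlinarith [mul_pos (pow_pos hg 4) (pow_pos hr 2)]
      have h2 : r^2 ≤ r^4 := pow_le_pow_right₀ hr1 (by norm_num)
      have hr2 : (1:ℝ) ≤ r^2 := by nlinarith
      have h3 : (1:ℝ) ≤ r^4 := by nlinarith
      calc |80*g^3*r^4 - 100*g^4*r^2 + 1024*g^5| * r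
          ≤ ((80*g^3 + 100*g^4 + 1024*g^5) * r^4) * r := by
            apply mul_le_mul_of_nonneg_right _ hr.le
            calc |80*g^3*r^4 - 100*g^4*r^2 + 1024*g^5|
                ≤ 80*g^3*r^4 + 100*g^4*r^2 + 1024*g^5 := h1
              _ ≤ (80*g^3 + 100*g^4 + 1024*g^5) * r^4 := by
                  nlinarith [mul_le_mul_of_nonneg_left h2 (by positivity : (0:ℝ) ≤ 100*g^4),
                    mul_le_mul_of_nonneg_left h3 (by positivity : (0:ℝ) ≤ 1024*g^5)]
        _ = (80*g^3 + 100*g^4 + 1024*g^5)/10 * (10 * r^5) := by ring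
        _ ≤ (80*g^3 + 100*g^4 + 1024*g^5)/10 *
              (10 * (u * (r^4 - 2*g*r^2 + 16*g^2) + (r^5 + 10*g^2*r))) := by
            apply mul_le_mul_of_nonneg_left _ (by positivity)
            nlinarith [mul_pos hu hQ, mul_pos (mul_pos hg hg) hr]
    · exact Tendsto.div_atTop tendsto_const_nhds tendsto_id
  exact (tendsto_zero_iff_abs_tendsto_zero _).mpr habs

lemma radial_integral (g : ℝ) (hg : 0 < g) :
    ∫ r in Set.Ioi (0:ℝ), r ^ 2 * (r ^ 2 *
        ((1 + 2 * g / r ^ 2) / (2 * Real.sqrt (1 + 4 * g / r ^ 2)) -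
          (1 + 2 * (g / r ^ 2) ^ 2) / 2)) = -(16/5) * (g^2 * Real.sqrt g) := by
  have hcont : ContinuousWithinAt (Fg g) (Set.Ici 0) 0 := by
    apply Continuous.continuousWithinAt
    unfold Fg
    fun_prop
  have h := integral_Ioi_of_hasDerivAt_of_nonpos hcont
    (fun r hr => Fg_deriv g hg r hr) (fun r hr => integrand_nonpos g hg r hr)
    (Fg_tendsto g hg)
  rw [h]
  have h4 : Real.sqrt (4*g) = 2 * Real.sqrt g := by
    rw [show (4:ℝ)*g = 2^2*g by norm_num, Real.sqrt_mul (by positivity), Real.sqrt_sq (by norm_num)]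
  have : Fg g 0 = 16/5 * (g^2 * Real.sqrt g) := by
    unfold Fg
    norm_num
    ring
  rw [this]; ring

theorem stmt_3 (g0 : ℝ) (hg0 : 0 < g0) :
    (1 / (2 * π) ^ 3) *
        ∫ k : EuclideanSpace ℝ (Fin 3),
          ‖k‖ ^ 2 *
            ((1 + 2 * g0 / ‖k‖ ^ 2) / (2 * Real.sqrt (1 + 4 * g0 / ‖k‖ ^ 2)) -
              (1 + 2 * (g0 / ‖k‖ ^ 2) ^ 2) / 2) =
      -(8 / (5 * π ^ 2)) * g0 ^ ((5 : ℝ) / 2) := by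
  have hπ : (0:ℝ) < π := Real.pi_pos
  have hint := MeasureTheory.integral_fun_norm_addHaar
    (volume : Measure (EuclideanSpace ℝ (Fin 3)))
    (fun r : ℝ => r ^ 2 * ((1 + 2 * g0 / r ^ 2) / (2 * Real.sqrt (1 + 4 * g0 / r ^ 2)) -
      (1 + 2 * (g0 / r ^ 2) ^ 2) / 2))
  rw [finrank_euclideanSpace] at hint
  simp only [Fintype.card_fin] at hint
  have hball : (volume (Metric.ball (0 : EuclideanSpace ℝ (Fin 3)) 1)).toReal = 4 * π / 3 := by
    rw [EuclideanSpace.volume_ball]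
    have hΓ : Real.Gamma ((Fintype.card (Fin 3) : ℝ) / 2 + 1) = 3/4 * Real.sqrt π := by
      simp only [Fintype.card_fin]
      rw [show ((3:ℕ):ℝ)/2 + 1 = (1/2 + 1) + 1 by norm_num, Real.Gamma_add_one (by norm_num),
        Real.Gamma_add_one (by norm_num), Real.Gamma_one_half_eq]
      ring
    rw [hΓ]
    simp only [Fintype.card_fin]
    rw [ENNReal.toReal_mul, ENNReal.toReal_pow, ENNReal.toReal_ofReal (by norm_num),
      ENNReal.toReal_ofReal (by positivity)]
    have hsq : Real.sqrt π ^ 3 = π * Real.sqrt π := by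
      rw [pow_succ, pow_two, Real.mul_self_sqrt hπ.le]
    rw [hsq, one_pow]
    have hs : Real.sqrt π ≠ 0 := by positivity
    field_simp
  rw [hint, measureReal_def, hball, nsmul_eq_mul, smul_eq_mul]
  simp only [smul_eq_mul, show (3:ℕ)-1 = 2 from rfl]
  rw [radial_integral g0 hg0]
  have h52 : g0 ^ ((5:ℝ)/2) = g0^2 * Real.sqrt g0 := by
    rw [show (5:ℝ)/2 = (2:ℕ) + 1/2 by norm_num, Real.rpow_add hg0, Real.rpow_natCast,
      ← Real.sqrt_eq_rpow]
  rw [h52]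
  have hπ' : π ≠ 0 := hπ.ne'
  field_simp
  ring
end

section
/- Let g0 > 0. Then (1/(8π³)) ∫_{ℝ³} (g0/|k|²)·(1 − 1/√(1 + 4g0/|k|²)) dk = g0^{3/2}/π². -/
open MeasureTheory Real

theorem stmt_4 (g0 : ℝ) (hg0 : 0 < g0) :
    (1 / (8 * π ^ 3)) *
        ∫ k : EuclideanSpace ℝ (Fin 3),
          (g0 / ‖k‖ ^ 2) * (1 - 1 / Real.sqrt (1 + 4 * g0 / ‖k‖ ^ 2)) =
      g0 ^ ((3 : ℝ) / 2) / π ^ 2 := by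
  have h4g0 : 0 < 4 * g0 := by linarith
  have hsq : ∀ x : ℝ, 0 < x ^ 2 + 4 * g0 := fun x => by positivity
  -- radial integral
  have hrad : ∫ y in Set.Ioi (0:ℝ),
      y ^ (3 - 1) • ((g0 / y ^ 2) * (1 - 1 / Real.sqrt (1 + 4 * g0 / y ^ 2)))
      = 2 * g0 * Real.sqrt g0 := by
    have hcongr : ∀ y ∈ Set.Ioi (0:ℝ),
        y ^ (3 - 1) • ((g0 / y ^ 2) * (1 - 1 / Real.sqrt (1 + 4 * g0 / y ^ 2)))
        = g0 * (1 - y / Real.sqrt (y ^ 2 + 4 * g0)) := by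
      intro y hy
      have hy0 : (0:ℝ) < y := hy
      have h1 : 1 + 4 * g0 / y ^ 2 = (y ^ 2 + 4 * g0) / y ^ 2 := by
        field_simp
      have h2 : Real.sqrt (1 + 4 * g0 / y ^ 2)
          = Real.sqrt (y ^ 2 + 4 * g0) / y := by
        rw [h1, Real.sqrt_div (hsq y).le, Real.sqrt_sq hy0.le]
      rw [h2]
      have hs : 0 < Real.sqrt (y ^ 2 + 4 * g0) := Real.sqrt_pos.mpr (hsq y)
      rw [one_div_div]
      simp only [smul_eq_mul]
      field_simp
    rw [setIntegral_congr_fun (by measurability) hcongr]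
    have key : ∫ y in Set.Ioi (0:ℝ), g0 * (1 - y / Real.sqrt (y ^ 2 + 4 * g0))
        = 0 - g0 * (0 - Real.sqrt (0 ^ 2 + 4 * g0)) := by
      apply integral_Ioi_of_hasDerivAt_of_nonneg'
        (g := fun x => g0 * (x - Real.sqrt (x ^ 2 + 4 * g0)))
      · intro x _
        have hd : HasDerivAt (fun x : ℝ => Real.sqrt (x ^ 2 + 4 * g0))
            ((2 * x) / (2 * Real.sqrt (x ^ 2 + 4 * g0))) x := by
          have h1 : HasDerivAt (fun x : ℝ => x ^ 2 + 4 * g0) (2 * x) x := by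
            simpa using (hasDerivAt_pow 2 x).add_const (4 * g0)
          exact h1.sqrt (hsq x).ne'
        have : HasDerivAt (fun x => g0 * (x - Real.sqrt (x ^ 2 + 4 * g0)))
            (g0 * (1 - 2 * x / (2 * Real.sqrt (x ^ 2 + 4 * g0)))) x :=
          ((hasDerivAt_id x).sub hd).const_mul g0
        convert this using 1
        have hs : Real.sqrt (x ^ 2 + 4 * g0) ≠ 0 := (Real.sqrt_pos.mpr (hsq x)).ne'
        rw [mul_div_mul_left _ _ (two_ne_zero' ℝ)]
      · intro x hx
        have hx0 : (0:ℝ) < x := hx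
        have hs : 0 < Real.sqrt (x ^ 2 + 4 * g0) := Real.sqrt_pos.mpr (hsq x)
        have hle : x ≤ Real.sqrt (x ^ 2 + 4 * g0) := by
          nlinarith [Real.sq_sqrt (hsq x).le, Real.sqrt_nonneg (x ^ 2 + 4 * g0)]
        have : x / Real.sqrt (x ^ 2 + 4 * g0) ≤ 1 := (div_le_one hs).mpr hle
        nlinarith
      · -- tendsto 0 at top
        have hEq : ∀ᶠ x : ℝ in Filter.atTop,
            g0 * (-(4 * g0) / (x + Real.sqrt (x ^ 2 + 4 * g0)))
            = g0 * (x - Real.sqrt (x ^ 2 + 4 * g0)) := by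
          filter_upwards [Filter.eventually_gt_atTop (0:ℝ)] with x hx
          have hs : 0 < Real.sqrt (x ^ 2 + 4 * g0) := Real.sqrt_pos.mpr (hsq x)
          have hden : x + Real.sqrt (x ^ 2 + 4 * g0) ≠ 0 := by positivity
          have hsq' : Real.sqrt (x ^ 2 + 4 * g0) ^ 2 = x ^ 2 + 4 * g0 :=
            Real.sq_sqrt (hsq x).le
          field_simp
          nlinarith [hsq', Real.sq_sqrt (show (0:ℝ) ≤ x ^ 2 + g0 * 4 by positivity)]
        have htop : Filter.Tendsto (fun x : ℝ => x + Real.sqrt (x ^ 2 + 4 * g0))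
            Filter.atTop Filter.atTop :=
          Filter.tendsto_atTop_mono (fun x => le_add_of_nonneg_right (Real.sqrt_nonneg _))
            Filter.tendsto_id
        have h0 : Filter.Tendsto
            (fun x : ℝ => g0 * (-(4 * g0) / (x + Real.sqrt (x ^ 2 + 4 * g0))))
            Filter.atTop (nhds (g0 * (-(4 * g0) * 0))) := by
          exact (Filter.Tendsto.const_mul _
            ((tendsto_const_nhds (x := -(4*g0))).mul htop.inv_tendsto_atTop)).congr
            (fun x => by simp [div_eq_mul_inv])
        simpa using h0.congr' hEq
    rw [key]
    have h40 : Real.sqrt (4 * g0) = 2 * Real.sqrt g0 := by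
      rw [show (4:ℝ) * g0 = 2 ^ 2 * g0 by ring, Real.sqrt_mul (by positivity),
        Real.sqrt_sq (by norm_num)]
    rw [show (0:ℝ) ^ 2 + 4 * g0 = 4 * g0 by ring, h40]
    ring
  -- spherical coordinates
  rw [show (fun k : EuclideanSpace ℝ (Fin 3) =>
      (g0 / ‖k‖ ^ 2) * (1 - 1 / Real.sqrt (1 + 4 * g0 / ‖k‖ ^ 2)))
      = fun k : EuclideanSpace ℝ (Fin 3) =>
        (fun y : ℝ => (g0 / y ^ 2) * (1 - 1 / Real.sqrt (1 + 4 * g0 / y ^ 2))) ‖k‖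
      from rfl,
    MeasureTheory.integral_fun_norm_addHaar volume
      (fun y : ℝ => (g0 / y ^ 2) * (1 - 1 / Real.sqrt (1 + 4 * g0 / y ^ 2)))]
  have hdim : Module.finrank ℝ (EuclideanSpace ℝ (Fin 3)) = 3 := finrank_euclideanSpace_fin
  rw [hdim]
  -- volume of unit ball
  have hΓ : Real.Gamma ((3:ℝ) / 2 + 1) = 3 / 4 * Real.sqrt π := by
    rw [Real.Gamma_add_one (by norm_num)]
    rw [show (3:ℝ)/2 = 1/2 + 1 by norm_num, Real.Gamma_add_one (by norm_num),
      Real.Gamma_one_half_eq]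
    ring
  have hball : (volume (Metric.ball (0 : EuclideanSpace ℝ (Fin 3)) 1)).toReal
      = 4 / 3 * π := by
    rw [EuclideanSpace.volume_ball]
    have hcard : (Fintype.card (Fin 3)) = 3 := by simp
    rw [hcard]
    push_cast
    rw [hΓ]
    have h1 : Real.sqrt π ^ 3 / (3 / 4 * Real.sqrt π) = 4 / 3 * π := by
      rw [pow_succ, Real.sq_sqrt Real.pi_pos.le]
      have : Real.sqrt π ≠ 0 := (Real.sqrt_pos.mpr Real.pi_pos).ne'
      field_simp
    rw [h1, ENNReal.ofReal_one, one_pow, one_mul,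
      ENNReal.toReal_ofReal (by positivity)]
  rw [measureReal_def, hball, hrad]
  have hg32 : g0 ^ ((3:ℝ)/2) = g0 * Real.sqrt g0 := by
    rw [show (3:ℝ)/2 = 1 + 1/2 by norm_num, Real.rpow_add hg0, Real.rpow_one,
      ← Real.sqrt_eq_rpow]
  rw [hg32, nsmul_eq_mul, smul_eq_mul]
  have hπ : π ≠ 0 := Real.pi_ne_zero
  field_simp
  ring
end

section
/- Let g0 > 0, ρ > 0, and for u ≠ 0 let λ_u be defined by ρλ_u = (1−h)/(1+h) with h = √(1 + 4g0ρ/|u|²). Then λ_u/(1 − ρ²λ_u²) + g0/|u|² = (g0/|u|²)·(h−1)/h, which after the substitution u = √ρ·k and integration gives lim (1/(8π³))∫_{ℝ³} (g0/|k|²)(√(1+4g0/|k|²)−1)/√(1+4g0/|k|²) dk³ = g0^{3/2}/π². -/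
open MeasureTheory Real

-- 1D improper integral
lemma oneD (g0 : ℝ) (hg0 : 0 < g0) :
    ∫ y in Set.Ioi (0:ℝ), (1 - y / Real.sqrt (y^2 + 4*g0)) = 2 * Real.sqrt g0 := by
  set G : ℝ → ℝ := fun y => y - Real.sqrt (y^2 + 4*g0) with hG
  have hpos : ∀ y : ℝ, 0 < y^2 + 4*g0 := fun y => by positivity
  have hderiv : ∀ y : ℝ, HasDerivAt G (1 - y / Real.sqrt (y^2 + 4*g0)) y := by
    intro y
    have h1 : HasDerivAt (fun y : ℝ => y^2 + 4*g0) (2*y) y := by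
      simpa using ((hasDerivAt_pow 2 y).add_const (4*g0))
    have h2 := h1.sqrt (ne_of_gt (hpos y))
    have h3 := (hasDerivAt_id y).sub h2
    refine h3.congr_deriv ?_
    have hs : Real.sqrt (y^2 + 4*g0) > 0 := Real.sqrt_pos.mpr (hpos y)
    rw [mul_div_mul_left _ _ two_ne_zero]
  have hle : ∀ y : ℝ, y ≤ Real.sqrt (y^2 + 4*g0) := by
    intro y
    rcases le_or_gt y 0 with h | h
    · exact h.trans (Real.sqrt_nonneg _)
    · have := Real.sqrt_le_sqrt (show y^2 ≤ y^2 + 4*g0 by nlinarith)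
      calc y = Real.sqrt (y^2) := by rw [Real.sqrt_sq h.le]
        _ ≤ _ := this
  have hnonneg : ∀ y ∈ Set.Ioi (0:ℝ), 0 ≤ 1 - y / Real.sqrt (y^2 + 4*g0) := by
    intro y _
    have hs : 0 < Real.sqrt (y^2 + 4*g0) := Real.sqrt_pos.mpr (hpos y)
    rw [sub_nonneg, div_le_one hs]
    exact hle y
  have htend : Filter.Tendsto G Filter.atTop (nhds 0) := by
    have heq : ∀ y : ℝ, 0 ≤ y → G y = -(4*g0) / (y + Real.sqrt (y^2 + 4*g0)) := by
      intro y hy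
      have hs : 0 < Real.sqrt (y^2 + 4*g0) := Real.sqrt_pos.mpr (hpos y)
      have hsq : Real.sqrt (y^2 + 4*g0) ^ 2 = y^2 + 4*g0 := Real.sq_sqrt (hpos y).le
      have hd : 0 < y + Real.sqrt (y^2 + 4*g0) := by linarith
      rw [hG]
      field_simp
      nlinarith
    have h1 : Filter.Tendsto (fun y : ℝ => y + Real.sqrt (y^2 + 4*g0)) Filter.atTop Filter.atTop :=
      Filter.tendsto_atTop_mono (fun y => le_add_of_nonneg_right (Real.sqrt_nonneg _)) Filter.tendsto_id
    have h2 : Filter.Tendsto (fun y : ℝ => -(4*g0) / (y + Real.sqrt (y^2 + 4*g0)))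
        Filter.atTop (nhds 0) := Filter.Tendsto.div_atTop tendsto_const_nhds h1
    refine h2.congr' ?_
    filter_upwards [Filter.eventually_ge_atTop (0:ℝ)] with y hy
    exact (heq y hy).symm
  have hcont : ContinuousWithinAt G (Set.Ici 0) 0 :=
    (hderiv 0).continuousAt.continuousWithinAt
  have := integral_Ioi_of_hasDerivAt_of_nonneg hcont (fun x _ => hderiv x) hnonneg htend
  rw [this, hG]
  simp only
  have : Real.sqrt ((0:ℝ)^2 + 4*g0) = 2 * Real.sqrt g0 := by
    rw [show (0:ℝ)^2 + 4*g0 = 4*g0 by ring, show (4:ℝ) = 2^2 by norm_num,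
      Real.sqrt_mul (by positivity), Real.sqrt_sq (by norm_num)]
  rw [this]; ring

theorem stmt_11 (g0 ρ : ℝ) (hg0 : 0 < g0) (hρ : 0 < ρ) :
    (∀ u : EuclideanSpace ℝ (Fin 3), u ≠ 0 →
        ∀ lam : ℝ, ρ * lam = (1 - Real.sqrt (1 + 4 * g0 * ρ / ‖u‖ ^ 2)) /
            (1 + Real.sqrt (1 + 4 * g0 * ρ / ‖u‖ ^ 2)) →
          lam / (1 - ρ ^ 2 * lam ^ 2) + g0 / ‖u‖ ^ 2 =
            (g0 / ‖u‖ ^ 2) * (Real.sqrt (1 + 4 * g0 * ρ / ‖u‖ ^ 2) - 1) /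
              Real.sqrt (1 + 4 * g0 * ρ / ‖u‖ ^ 2)) ∧
      (1 / (8 * π ^ 3)) *
          ∫ k : EuclideanSpace ℝ (Fin 3),
            (g0 / ‖k‖ ^ 2) * (Real.sqrt (1 + 4 * g0 / ‖k‖ ^ 2) - 1) /
              Real.sqrt (1 + 4 * g0 / ‖k‖ ^ 2) =
        g0 ^ ((3 : ℝ) / 2) / π ^ 2 := by
  constructor
  · intro u hu lam heq
    set s := ‖u‖ ^ 2 with hs
    have hspos : 0 < s := by
      have : ‖u‖ ≠ 0 := norm_ne_zero_iff.mpr hu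
      positivity
    set h := Real.sqrt (1 + 4 * g0 * ρ / s) with hh
    have harg : 0 < 1 + 4 * g0 * ρ / s := by positivity
    have hhpos : 0 < h := Real.sqrt_pos.mpr harg
    have hhsq : h ^ 2 = 1 + 4 * g0 * ρ / s := Real.sq_sqrt harg.le
    have hh1 : 1 ≤ h := by
      calc (1:ℝ) = Real.sqrt 1 := Real.sqrt_one.symm
        _ ≤ h := Real.sqrt_le_sqrt (by have := div_pos (show (0:ℝ) < 4*g0*ρ by positivity) hspos; linarith)
    have h1h : (0:ℝ) < 1 + h := by linarith
    have hlam : lam = (1 - h) / (ρ * (1 + h)) := by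
      field_simp at heq ⊢
      linarith
    have hden : 1 - ρ ^ 2 * lam ^ 2 = 4 * h / (1 + h) ^ 2 := by
      rw [hlam]
      field_simp
      ring
    rw [hden, hlam]
    have hsrel : h ^ 2 * s = s + 4 * g0 * ρ := by
      field_simp at hhsq
      linarith
    field_simp
    have hsrel' : h ^ 2 * ‖u‖^2 = ‖u‖^2 + 4 * g0 * ρ := hsrel
    linear_combination (-1 : ℝ) * hsrel'
  · -- the integral
    have key := integral_fun_norm_addHaar (volume : Measure (EuclideanSpace ℝ (Fin 3)))
      (fun r : ℝ => (g0 / r ^ 2) * (Real.sqrt (1 + 4 * g0 / r ^ 2) - 1) /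
        Real.sqrt (1 + 4 * g0 / r ^ 2))
    have hdim : Module.finrank ℝ (EuclideanSpace ℝ (Fin 3)) = 3 := by
      simp [finrank_euclideanSpace]
    rw [hdim] at key
    have hvol : (volume (Metric.ball (0 : EuclideanSpace ℝ (Fin 3)) 1)).toReal = 4 * π / 3 := by
      rw [EuclideanSpace.volume_ball]
      have hcard : (Fintype.card (Fin 3)) = 3 := by simp
      rw [hcard]
      have hG : Real.Gamma ((3:ℕ) / 2 + 1) = 3 / 4 * Real.sqrt π := by
        push_cast
        rw [Real.Gamma_add_one (by norm_num),
          show (3:ℝ)/2 = 1/2 + 1 by norm_num, Real.Gamma_add_one (by norm_num),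
          Real.Gamma_one_half_eq]
        ring
      rw [hG]
      have hsp : Real.sqrt π ^ 3 = π * Real.sqrt π := by
        rw [pow_succ, sq, Real.mul_self_sqrt Real.pi_pos.le]
      have hspne : Real.sqrt π > 0 := Real.sqrt_pos.mpr Real.pi_pos
      rw [ENNReal.ofReal_one, one_pow, one_mul, ENNReal.toReal_ofReal (by positivity)]
      rw [hsp]
      field_simp
    have h1d : (∫ y in Set.Ioi (0:ℝ), y ^ (3 - 1) •
        ((g0 / y ^ 2) * (Real.sqrt (1 + 4 * g0 / y ^ 2) - 1) /
          Real.sqrt (1 + 4 * g0 / y ^ 2))) = 2 * g0 * Real.sqrt g0 := by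
      rw [show (3:ℕ) - 1 = 2 from rfl]
      have hcongr : ∀ y ∈ Set.Ioi (0:ℝ), y ^ 2 •
          ((g0 / y ^ 2) * (Real.sqrt (1 + 4 * g0 / y ^ 2) - 1) /
            Real.sqrt (1 + 4 * g0 / y ^ 2)) = g0 * (1 - y / Real.sqrt (y^2 + 4*g0)) := by
        intro y hy
        have hy0 : 0 < y := hy
        have harg : 0 < 1 + 4 * g0 / y ^ 2 := by positivity
        have hS : 0 < Real.sqrt (y^2 + 4*g0) := Real.sqrt_pos.mpr (by positivity)
        have hsp : Real.sqrt (1 + 4*g0/y^2) = Real.sqrt (y^2 + 4*g0) / y := by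
          rw [show 1 + 4*g0/y^2 = (y^2 + 4*g0) / y^2 by field_simp,
            Real.sqrt_div (by positivity), Real.sqrt_sq hy0.le]
        rw [smul_eq_mul, hsp]
        field_simp
      rw [setIntegral_congr_fun measurableSet_Ioi hcongr]
      rw [integral_const_mul, oneD g0 hg0]
      ring
    rw [key, h1d, measureReal_def, hvol]
    have hrpow : g0 ^ ((3:ℝ)/2) = g0 * Real.sqrt g0 := by
      rw [show (3:ℝ)/2 = 1 + 1/2 by norm_num, Real.rpow_add hg0, Real.rpow_one,
        Real.sqrt_eq_rpow]
    rw [hrpow]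
    have hπ : π > 0 := Real.pi_pos
    simp only [smul_eq_mul, nsmul_eq_mul]
    field_simp
    ring
end
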